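/- arXiv:1010.4930 — 6 statements merged into one kernel-verified Lean document; each statement's English description precedes it below -/
import Mathlib

section
/- The sum μ(S) = μ1(S) + μ2(S) of the two Haldane functions μ1(S) = 1.2 S/(0.1 + S + 10 S²) and μ2(S) = 1.5 S/(5 + S + 0.5 S²) possesses at least two distinct strict local maximum points in the open interval (0, 10). -/
/-!
Clearing denominators, `μ'(S) = P(S) / (400 D₁(S)² D₂(S)²)`, where `D₁, D₂` are the two Haldane
denominators and `P` is a polynomial of degree 6. On `[0.1, 0.13]` and on `[2.6, 2.8]` the
polynomial `P` goes from positive to negative and is strictly decreasing (its derivative is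
negative there, by crude bounds on the monomials). So on each of these intervals `μ'` vanishes
exactly once, changing sign from `+` to `-`, and `μ` has a strict maximum at that zero.
-/

open Set Filter

noncomputable section

/-- The sum of the two Haldane functions
`μ1(S) = 1.2 S/(0.1 + S + 10 S²)` and `μ2(S) = 1.5 S/(5 + S + 0.5 S²)`. -/
def haldaneSum (S : ℝ) : ℝ :=
  1.2 * S / (0.1 + S + 10 * S ^ 2) + 1.5 * S / (5 + S + 0.5 * S ^ 2)

section SignChange

variable {f g d : ℝ → ℝ} {a b c : ℝ}

theorem forall_lt_of_deriv_pos_of_deriv_neg (hf : ContinuousOn f (Ioo a b)) (hc : c ∈ Ioo a b)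
    (hpos : ∀ x ∈ Ioo a c, 0 < deriv f x) (hneg : ∀ x ∈ Ioo c b, deriv f x < 0) :
    ∀ x ∈ Ioo a b, x ≠ c → f x < f c := by
  have hmono : StrictMonoOn f (Ioc a c) :=
    strictMonoOn_of_deriv_pos (convex_Ioc a c) (hf.mono (Ioc_subset_Ioo_right hc.2))
      (by rwa [interior_Ioc])
  have hanti : StrictAntiOn f (Ico c b) :=
    strictAntiOn_of_deriv_neg (convex_Ico c b) (hf.mono (Ico_subset_Ioo_left hc.1))
      (by rwa [interior_Ico])
  intro x hx hxc
  rcases hxc.lt_or_gt with hlt | hgt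
  · exact hmono ⟨hx.1, hlt.le⟩ ⟨hx.1.trans hlt, le_rfl⟩ hlt
  · exact hanti ⟨le_rfl, hgt.trans hx.2⟩ ⟨hgt.le, hx.2⟩ hgt

theorem exists_pos_neg_of_strictAntiOn (hab : a ≤ b) (hg : ContinuousOn g (Icc a b))
    (hanti : StrictAntiOn g (Icc a b)) (ha : 0 < g a) (hb : g b < 0) :
    ∃ c ∈ Ioo a b, (∀ x ∈ Ico a c, 0 < g x) ∧ ∀ x ∈ Ioc c b, g x < 0 := by
  obtain ⟨c, hc, hgc⟩ := intermediate_value_Ioo' hab hg ⟨hb, ha⟩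
  refine ⟨c, hc, fun x hx => ?_, fun x hx => ?_⟩
  · rw [← hgc]
    exact hanti ⟨hx.1, hx.2.le.trans hc.2.le⟩ (Ioo_subset_Icc_self hc) hx.2
  · rw [← hgc]
    exact hanti (Ioo_subset_Icc_self hc) ⟨hc.1.le.trans hx.1.le, hx.2⟩ hx.1

theorem exists_forall_lt_of_hasDerivAt_div (hab : a ≤ b)
    (hf : ∀ x ∈ Ioo a b, HasDerivAt f (g x / d x) x) (hd : ∀ x ∈ Ioo a b, 0 < d x)
    (hg : ContinuousOn g (Icc a b)) (hanti : StrictAntiOn g (Icc a b))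
    (ha : 0 < g a) (hb : g b < 0) :
    ∃ c ∈ Ioo a b, ∀ x ∈ Ioo a b, x ≠ c → f x < f c := by
  obtain ⟨c, hc, hpos, hneg⟩ := exists_pos_neg_of_strictAntiOn hab hg hanti ha hb
  refine ⟨c, hc, forall_lt_of_deriv_pos_of_deriv_neg
    (fun x hx => (hf x hx).continuousAt.continuousWithinAt) hc (fun x hx => ?_) (fun x hx => ?_)⟩
  · have hx' : x ∈ Ioo a b := ⟨hx.1, hx.2.trans hc.2⟩
    rw [(hf x hx').deriv]
    exact div_pos (hpos x (Ioo_subset_Ico_self hx)) (hd x hx')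
  · have hx' : x ∈ Ioo a b := ⟨hc.1.trans hx.1, hx.2⟩
    rw [(hf x hx').deriv]
    exact div_neg_of_neg_of_pos (hneg x (Ioo_subset_Ioc_self hx)) (hd x hx')

end SignChange

theorem hasDerivAt_haldane {m K q x : ℝ} (hx : K + x + q * x ^ 2 ≠ 0) :
    HasDerivAt (fun S => m * S / (K + S + q * S ^ 2))
      (m * (K - q * x ^ 2) / (K + x + q * x ^ 2) ^ 2) x := by
  have hnum := (hasDerivAt_id' x).const_mul m
  have hden := ((hasDerivAt_id' x).const_add K).fun_add ((hasDerivAt_pow 2 x).const_mul q)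
  refine (hnum.fun_div hden hx).congr_deriv ?_
  push_cast
  ring

/-- `400 (0.1 + S + 10 S²)² (5 + S + 0.5 S²)² μ'(S)`, expanded. -/
def haldaneSumNum (S : ℝ) : ℝ :=
  1230 + 1080 * S - 110715 * S ^ 2 + 11988 * S ^ 3 + 270312 * S ^ 4 - 10800 * S ^ 5
    - 31200 * S ^ 6

theorem hasDerivAt_haldaneSum {x : ℝ} (hx : 0 < x) :
    HasDerivAt haldaneSum
      (haldaneSumNum x / (400 * (0.1 + x + 10 * x ^ 2) ^ 2 * (5 + x + 0.5 * x ^ 2) ^ 2)) x := by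
  have h₁ : (0 : ℝ) < 0.1 + x + 10 * x ^ 2 := by positivity
  have h₂ : (0 : ℝ) < 5 + x + 0.5 * x ^ 2 := by positivity
  refine ((hasDerivAt_haldane h₁.ne').fun_add (hasDerivAt_haldane h₂.ne')).congr_deriv ?_
  rw [haldaneSumNum]
  field_simp
  ring

theorem hasDerivAt_haldaneSumNum (x : ℝ) :
    HasDerivAt haldaneSumNum
      (1080 - 221430 * x + 35964 * x ^ 2 + 1081248 * x ^ 3 - 54000 * x ^ 4 - 187200 * x ^ 5) x := by
  have hmon (c : ℝ) (n : ℕ) := (hasDerivAt_pow n x).const_mul c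
  refine ((((((((hasDerivAt_id' x).const_mul 1080).const_add 1230).fun_sub (hmon 110715 2)).fun_add
    (hmon 11988 3)).fun_add (hmon 270312 4)).fun_sub (hmon 10800 5)).fun_sub
    (hmon 31200 6)).congr_deriv ?_
  push_cast
  ring

theorem strictAntiOn_haldaneSumNum {s : Set ℝ} (hs : Convex ℝ s)
    (h : ∀ x ∈ s,
      1080 - 221430 * x + 35964 * x ^ 2 + 1081248 * x ^ 3 - 54000 * x ^ 4 - 187200 * x ^ 5 < 0) :
    StrictAntiOn haldaneSumNum s :=
  strictAntiOn_of_hasDerivWithinAt_neg hs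
    (fun x _ => (hasDerivAt_haldaneSumNum x).continuousAt.continuousWithinAt)
    (fun x _ => (hasDerivAt_haldaneSumNum x).hasDerivWithinAt)
    (fun x hx => h x (interior_subset hx))

theorem strictAntiOn_haldaneSumNum_Icc_lower : StrictAntiOn haldaneSumNum (Icc 0.1 0.13) := by
  refine strictAntiOn_haldaneSumNum (convex_Icc _ _) fun x ⟨hlo, hhi⟩ => ?_
  have h₂ : x ^ 2 ≤ 0.13 ^ 2 := pow_le_pow_left₀ (by linarith) hhi 2
  have h₃ : x ^ 3 ≤ 0.13 ^ 3 := pow_le_pow_left₀ (by linarith) hhi 3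
  have h₄ : 0 ≤ x ^ 4 := by positivity
  have h₅ : 0 ≤ x ^ 5 := by positivity
  linarith

theorem strictAntiOn_haldaneSumNum_Icc_upper : StrictAntiOn haldaneSumNum (Icc 2.6 2.8) := by
  refine strictAntiOn_haldaneSumNum (convex_Icc _ _) fun x ⟨hlo, hhi⟩ => ?_
  have h₂ : x ^ 2 ≤ 2.8 ^ 2 := pow_le_pow_left₀ (by linarith) hhi 2
  have h₃ : x ^ 3 ≤ 2.8 ^ 3 := pow_le_pow_left₀ (by linarith) hhi 3
  have h₄ : 2.6 ^ 4 ≤ x ^ 4 := pow_le_pow_left₀ (by norm_num) hlo 4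
  have h₅ : 2.6 ^ 5 ≤ x ^ 5 := pow_le_pow_left₀ (by norm_num) hlo 5
  linarith

theorem exists_forall_lt_haldaneSum {a b : ℝ} (ha : 0 < a) (hab : a ≤ b)
    (hanti : StrictAntiOn haldaneSumNum (Icc a b)) (hPa : 0 < haldaneSumNum a)
    (hPb : haldaneSumNum b < 0) :
    ∃ c ∈ Ioo a b, ∀ x ∈ Ioo a b, x ≠ c → haldaneSum x < haldaneSum c :=
  exists_forall_lt_of_hasDerivAt_div hab (fun x hx => hasDerivAt_haldaneSum (ha.trans hx.1))
    (fun x hx => by have := ha.trans hx.1; positivity)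
    (fun x _ => (hasDerivAt_haldaneSumNum x).continuousAt.continuousWithinAt) hanti hPa hPb

/-- The sum `μ = μ1 + μ2` of the two Haldane functions possesses at least two distinct
strict local maximum points in the open interval `(0, 10)`: points `S̄` admitting a
neighborhood on which `μ(S) < μ(S̄)` for all `S ≠ S̄`. -/
theorem stmt2 :
    ∃ S1 S2 : ℝ, S1 ∈ Ioo (0:ℝ) 10 ∧ S2 ∈ Ioo (0:ℝ) 10 ∧ S1 ≠ S2 ∧
      (∃ U ∈ nhds S1, ∀ x ∈ U, x ≠ S1 → haldaneSum x < haldaneSum S1) ∧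
      (∃ U ∈ nhds S2, ∀ x ∈ U, x ≠ S2 → haldaneSum x < haldaneSum S2) := by
  obtain ⟨c₁, hc₁, hmax₁⟩ := exists_forall_lt_haldaneSum (by norm_num) (by norm_num)
    strictAntiOn_haldaneSumNum_Icc_lower (by norm_num [haldaneSumNum])
    (by norm_num [haldaneSumNum])
  obtain ⟨c₂, hc₂, hmax₂⟩ := exists_forall_lt_haldaneSum (by norm_num) (by norm_num)
    strictAntiOn_haldaneSumNum_Icc_upper (by norm_num [haldaneSumNum])
    (by norm_num [haldaneSumNum])
  refine ⟨c₁, c₂, ⟨?_, ?_⟩, ⟨?_, ?_⟩, ?_, ⟨_, isOpen_Ioo.mem_nhds hc₁, hmax₁⟩,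
    ⟨_, isOpen_Ioo.mem_nhds hc₂, hmax₂⟩⟩ <;> linarith [hc₁.1, hc₁.2, hc₂.1, hc₂.2]
end
end

section
/- Along any admissible trajectory of the planar fed-batch dynamics with initial condition S(0) < S_in, one has S(t) < S_in for every t ≥ 0. -/
open MeasureTheory Set

noncomputable section

/-- Planar fed-batch dynamics: an admissible trajectory `(S, V)` for a measurable
control `Q : [0,∞) → [0,Q_max]`, i.e. an absolutely continuous pair (written in
integral form, with integrable derivatives `S'`, `V'`) with `V > 0` satisfying a.e.
`S' = -μ(S)(M0/V - S + S_in) + (Q/V)(S_in - S)` and `V' = Q`. -/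
def IsPlanarTraj (Sin M0 Qmax : ℝ) (μ : ℝ → ℝ) (Q S V : ℝ → ℝ) : Prop :=
  Measurable Q ∧ (∀ t, 0 ≤ t → Q t ∈ Icc (0:ℝ) Qmax) ∧ (∀ t, 0 ≤ t → 0 < V t) ∧
  ∃ S' V' : ℝ → ℝ,
    (∀ T : ℝ, 0 < T → IntervalIntegrable S' volume 0 T ∧ IntervalIntegrable V' volume 0 T) ∧
    (∀ t, 0 ≤ t → S t = S 0 + ∫ s in (0:ℝ)..t, S' s) ∧
    (∀ t, 0 ≤ t → V t = V 0 + ∫ s in (0:ℝ)..t, V' s) ∧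
    (∀ᵐ t ∂(volume.restrict (Ici (0:ℝ))),
      S' t = -(μ (S t)) * (M0 / V t - S t + Sin) + (Q t / V t) * (Sin - S t) ∧
      V' t = Q t)

/-- Along any admissible trajectory of the planar fed-batch dynamics with initial
condition `S(0) < S_in`, one has `S(t) < S_in` for every `t ≥ 0`. -/
theorem stmt3 (Sin M0 Qmax : ℝ) (hSin : 0 < Sin) (hM0 : 0 < M0) (hQmax : 0 < Qmax)
    (μ : ℝ → ℝ) (hμ : ContDiff ℝ (⊤ : ℕ∞) μ) (hμ0 : μ 0 = 0) (hμpos : ∀ s, 0 < s → 0 < μ s)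
    (Q S V : ℝ → ℝ) (htraj : IsPlanarTraj Sin M0 Qmax μ Q S V)
    (h0 : S 0 < Sin) :
    ∀ t, 0 ≤ t → S t < Sin := by
  obtain ⟨hQmeas, hQbd, hVpos, S', V', hInt, hSrep, hVrep, hae⟩ := htraj
  by_contra hcon
  push_neg at hcon
  obtain ⟨t₀, ht₀, hSt₀⟩ := hcon
  have ht₀pos : 0 < t₀ := by
    rcases ht₀.lt_or_eq with h | h
    · exact h
    · exact absurd hSt₀ (by rw [← h]; exact not_le.2 h0)
  -- continuity of S and V on [0, t₀]
  have hIntS : IntervalIntegrable S' volume 0 t₀ := (hInt t₀ ht₀pos).1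
  have hIntV : IntervalIntegrable V' volume 0 t₀ := (hInt t₀ ht₀pos).2
  have huIcc : uIcc (0:ℝ) t₀ = Icc 0 t₀ := uIcc_of_le ht₀
  have hScont : ContinuousOn S (Icc 0 t₀) := by
    have h1 : ContinuousOn (fun x => S 0 + ∫ s in (0:ℝ)..x, S' s) (Icc 0 t₀) := by
      have := intervalIntegral.continuousOn_primitive_interval' hIntS
        (left_mem_uIcc (a := (0:ℝ)) (b := t₀))
      rw [huIcc] at this
      exact continuousOn_const.add this
    exact h1.congr fun t ht => hSrep t ht.1
  have hVcont : ContinuousOn V (Icc 0 t₀) := by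
    have h1 : ContinuousOn (fun x => V 0 + ∫ s in (0:ℝ)..x, V' s) (Icc 0 t₀) := by
      have := intervalIntegral.continuousOn_primitive_interval' hIntV
        (left_mem_uIcc (a := (0:ℝ)) (b := t₀))
      rw [huIcc] at this
      exact continuousOn_const.add this
    exact h1.congr fun t ht => hVrep t ht.1
  -- first hitting time
  set A : Set ℝ := Icc 0 t₀ ∩ S ⁻¹' Ici Sin with hA
  have hAclosed : IsClosed A :=
    hScont.preimage_isClosed_of_isClosed isClosed_Icc isClosed_Ici
  have hAne : A.Nonempty := ⟨t₀, ⟨ht₀, le_refl _⟩, hSt₀⟩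
  have hAbdd : BddBelow A := ⟨0, fun x hx => hx.1.1⟩
  set τ := sInf A with hτ
  have hτA : τ ∈ A := hAclosed.csInf_mem hAne hAbdd
  have hτ0 : 0 ≤ τ := hτA.1.1
  have hτt₀ : τ ≤ t₀ := hτA.1.2
  have hSτge : Sin ≤ S τ := hτA.2
  have hτpos : 0 < τ := by
    rcases hτ0.lt_or_eq with h | h
    · exact h
    · exact absurd hSτge (by rw [← h]; exact not_le.2 h0)
  -- before τ, S < Sin
  have hlt : ∀ t, 0 ≤ t → t < τ → S t < Sin := by
    intro t h0t htτ
    by_contra hge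
    push_neg at hge
    have : t ∈ A := ⟨⟨h0t, htτ.le.trans hτt₀⟩, hge⟩
    exact absurd (csInf_le hAbdd this) (not_le.2 htτ)
  -- S τ = Sin
  have hSτ : S τ = Sin := by
    refine le_antisymm ?_ hSτge
    have hcw : ContinuousWithinAt S (Ico 0 τ) τ :=
      (hScont τ hτA.1).mono (Ico_subset_Icc_self.trans
        (Icc_subset_Icc le_rfl hτt₀))
    have hne : (nhdsWithin τ (Ico 0 τ)).NeBot := by
      rw [← mem_closure_iff_nhdsWithin_neBot, closure_Ico hτpos.ne]
      exact ⟨hτ0, le_rfl⟩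
    exact le_of_tendsto hcw (Filter.eventually_of_mem self_mem_nhdsWithin
      fun t ht => (hlt t ht.1 ht.2).le)
  -- positivity of S near τ
  have hpos_nbhd : ∃ δ0 > 0, ∀ t ∈ Icc 0 t₀, |t - τ| < δ0 → 0 < S t := by
    have hcw : ContinuousWithinAt S (Icc 0 t₀) τ := hScont τ hτA.1
    have hev : ∀ᶠ t in nhdsWithin τ (Icc 0 t₀), S t ∈ Ioi (0:ℝ) := by
      apply hcw
      exact Ioi_mem_nhds (by rw [hSτ]; exact hSin)
    have hev' : {t | S t ∈ Ioi (0:ℝ)} ∈ nhdsWithin τ (Icc 0 t₀) := hev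
    rw [Metric.mem_nhdsWithin_iff] at hev'
    obtain ⟨δ0, hδ0, h⟩ := hev'
    exact ⟨δ0, hδ0, fun t ht hd =>
      h ⟨by simpa [Metric.mem_ball, Real.dist_eq] using hd, ht⟩⟩
  obtain ⟨δ0, hδ0pos, hSpos⟩ := hpos_nbhd
  -- δ1 : base half-width
  set δ1 := min (δ0 / 2) τ with hδ1
  have hδ1pos : 0 < δ1 := lt_min (by linarith) hτpos
  have hδ1τ : δ1 ≤ τ := min_le_right _ _
  have hδ1δ0 : δ1 < δ0 := lt_of_le_of_lt (min_le_left _ _) (by linarith)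
  have hsub : Icc (τ - δ1) τ ⊆ Icc 0 t₀ := by
    intro t ht
    exact ⟨by linarith [ht.1], le_trans ht.2 hτt₀⟩
  have hSposOn : ∀ t ∈ Icc (τ - δ1) τ, 0 < S t := by
    intro t ht
    refine hSpos t (hsub ht) ?_
    rw [abs_sub_lt_iff]
    constructor <;> [linarith [ht.2]; linarith [ht.1]]
  -- lower bound on V
  have hVcont1 : ContinuousOn V (Icc (τ - δ1) τ) := hVcont.mono hsub
  obtain ⟨cV, hcV, hVmin'⟩ := (isCompact_Icc (a := τ - δ1) (b := τ)).exists_isMinOn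
    (nonempty_Icc.2 (by linarith)) hVcont1
  have hVmin : ∀ t ∈ Icc (τ - δ1) τ, V cV ≤ V t := fun t ht => hVmin' ht
  set vmin := V cV with hvmin
  have hvminpos : 0 < vmin := hVpos cV (hsub hcV).1
  set K := Qmax / vmin with hK
  have hKpos : 0 < K := div_pos hQmax hvminpos
  -- final half-width
  set δ := min δ1 (1 / (2 * K)) with hδ
  have hδpos : 0 < δ := lt_min hδ1pos (by positivity)
  have hδδ1 : δ ≤ δ1 := min_le_left _ _
  have hδK : δ ≤ 1 / (2 * K) := min_le_right _ _
  set a := τ - δ with ha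
  have ha0 : 0 ≤ a := by have := hδδ1.trans hδ1τ; simp only [ha]; linarith
  have haτ : a < τ := by simp only [ha]; linarith
  have hsub2 : Icc a τ ⊆ Icc (τ - δ1) τ := Icc_subset_Icc (by simp only [ha]; linarith) le_rfl
  -- S ≤ Sin on [a, τ]
  have hSle : ∀ t ∈ Icc a τ, S t ≤ Sin := by
    intro t ht
    rcases ht.2.lt_or_eq with h | h
    · exact (hlt t (ha0.trans ht.1) h).le
    · rw [h, hSτ]
  -- max of Sin - S on [a, τ]
  have hScont2 : ContinuousOn (fun t => Sin - S t) (Icc a τ) :=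
    continuousOn_const.sub (hScont.mono (hsub2.trans hsub))
  obtain ⟨c, hc, hMmax'⟩ := (isCompact_Icc (a := a) (b := τ)).exists_isMaxOn
    (nonempty_Icc.2 haτ.le) hScont2
  have hMmax : ∀ t ∈ Icc a τ, Sin - S t ≤ Sin - S c := fun t ht => hMmax' ht
  set M := Sin - S c with hM
  have hMpos : 0 < M := lt_of_lt_of_le (by
      have := hlt a ha0 haτ; linarith)
    (hMmax a ⟨le_rfl, haτ.le⟩)
  have hcτ : c ≤ τ := hc.2
  have h0c : 0 ≤ c := ha0.trans hc.1
  -- integrability on subintervals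
  have hIntSc : IntervalIntegrable S' volume c τ := by
    apply hIntS.mono_set
    rw [huIcc, uIcc_of_le hcτ]
    exact Icc_subset_Icc h0c hτt₀
  -- integral representation on [c, τ]
  have hrep : S τ = S c + ∫ s in c..τ, S' s := by
    have h1 := hSrep τ hτ0
    have h2 := hSrep c h0c
    have hI1 : IntervalIntegrable S' volume 0 τ := by
      apply hIntS.mono_set
      rw [huIcc, uIcc_of_le hτ0]
      exact Icc_subset_Icc le_rfl hτt₀
    have hI2 : IntervalIntegrable S' volume 0 c := by
      apply hIntS.mono_set
      rw [huIcc, uIcc_of_le h0c]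
      exact Icc_subset_Icc le_rfl (hcτ.trans hτt₀)
    have := intervalIntegral.integral_interval_sub_left hI1 hI2
    rw [h1, h2]
    linarith [this]
  -- a.e. bound for S' on [c, τ]
  have haebd : ∀ᵐ t ∂(volume.restrict (Icc c τ)), S' t ≤ K * M := by
    have hae' : ∀ᵐ t ∂(volume.restrict (Icc c τ)),
        S' t = -(μ (S t)) * (M0 / V t - S t + Sin) + (Q t / V t) * (Sin - S t) ∧
        V' t = Q t := by
      refine ae_restrict_of_ae_restrict_of_subset ?_ hae
      intro t ht
      exact h0c.trans ht.1
    refine (hae'.and (ae_restrict_mem measurableSet_Icc)).mono ?_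
    rintro t ⟨⟨heq, -⟩, htmem⟩
    have htmem' : t ∈ Icc a τ := Icc_subset_Icc hc.1 le_rfl htmem
    have ht0 : 0 ≤ t := ha0.trans htmem'.1
    have hSt : 0 < S t := hSposOn t (hsub2 htmem')
    have hStle : S t ≤ Sin := hSle t htmem'
    have hVt : 0 < V t := hVpos t ht0
    have hVtmin : vmin ≤ V t := hVmin t (hsub2 htmem')
    have hQt := hQbd t ht0
    have hterm1 : -(μ (S t)) * (M0 / V t - S t + Sin) ≤ 0 := by
      apply mul_nonpos_of_nonpos_of_nonneg
      · linarith [hμpos (S t) hSt]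
      · have : 0 < M0 / V t := div_pos hM0 hVt
        linarith
    have hQVle : Q t / V t ≤ K := by
      rw [hK]
      exact div_le_div₀ hQmax.le hQt.2 hvminpos hVtmin
    have hQVnn : 0 ≤ Q t / V t := div_nonneg hQt.1 hVt.le
    have hyle : Sin - S t ≤ M := hMmax t htmem'
    have hynn : 0 ≤ Sin - S t := by linarith
    have hterm2 : (Q t / V t) * (Sin - S t) ≤ K * M :=
      mul_le_mul hQVle hyle hynn hKpos.le
    rw [heq]
    linarith
  -- bound the integral
  have hintle : (∫ s in c..τ, S' s) ≤ K * M * (τ - c) := by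
    have h1 := intervalIntegral.integral_mono_ae_restrict (f := S') (g := fun _ => K * M)
      hcτ hIntSc intervalIntegrable_const haebd
    rw [intervalIntegral.integral_const, smul_eq_mul] at h1
    exact h1.trans_eq (mul_comm _ _)
  have hτc : τ - c ≤ δ := by have := hc.1; simp only [ha] at this; linarith
  clear_value A τ δ1 vmin K δ a M
  have hfinal : K * M * (τ - c) ≤ M / 2 := by
    have h1 : K * M * (τ - c) ≤ K * M * δ := by
      apply mul_le_mul_of_nonneg_left hτc (by positivity)
    have h2 : K * M * δ ≤ K * M * (1 / (2 * K)) :=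
      mul_le_mul_of_nonneg_left hδK (by positivity)
    have h3 : K * M * (1 / (2 * K)) = M / 2 := by
      field_simp
    linarith
  have hconc : S τ ≤ S c + M / 2 := by rw [hrep]; linarith
  rw [hSτ] at hconc
  rw [hM] at hconc
  linarith
end
end

section
/- (Switching function derivative) Let (S(·),V(·)) be an admissible trajectory of the planar fed-batch dynamics and let (λ_S(·),λ_V(·)) solve the adjoint system along it. Then the switching function φ(t) = λ_S(t)(S_in − S(t))/V(t) + λ_V(t) is absolutely continuous and satisfies, for almost every t, φ'(t) = λ_S(t) ((S_in − S(t))/V(t)) μ'(S(t)) X(t), where X(t) = M0/V(t) + S_in − S(t). -/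
open MeasureTheory Set

noncomputable section

/-- The adjoint system along a trajectory `(S, V)` with control `Q`: absolutely
continuous `(λ_S, λ_V)` (in integral form with integrable derivatives) satisfying a.e.
`λ_S' = λ_S (μ'(S) X - μ(S) + Q/V)` and `λ_V' = λ_S (-μ(S) M0 + Q (S_in - S))/V²`,
where `X = M0/V + S_in - S`. -/
def IsAdjoint (Sin M0 : ℝ) (μ : ℝ → ℝ) (Q S V lS lV : ℝ → ℝ) : Prop :=
  ∃ lS' lV' : ℝ → ℝ,
    (∀ T : ℝ, 0 < T → IntervalIntegrable lS' volume 0 T ∧ IntervalIntegrable lV' volume 0 T) ∧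
    (∀ t, 0 ≤ t → lS t = lS 0 + ∫ s in (0:ℝ)..t, lS' s) ∧
    (∀ t, 0 ≤ t → lV t = lV 0 + ∫ s in (0:ℝ)..t, lV' s) ∧
    (∀ᵐ t ∂(volume.restrict (Ici (0:ℝ))),
      lS' t = lS t * (deriv μ (S t) * (M0 / V t + Sin - S t) - μ (S t) + Q t / V t) ∧
      lV' t = lS t * (-(μ (S t)) * M0 + Q t * (Sin - S t)) / (V t) ^ 2)

open intervalIntegral


/-- Continuity of an integral-form function on `[0,T]`. -/
lemma contOn_of_prim {f' F : ℝ → ℝ} {T : ℝ} (hT : 0 ≤ T)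
    (hi : IntervalIntegrable f' volume 0 T)
    (hF : ∀ t, 0 ≤ t → F t = F 0 + ∫ s in (0:ℝ)..t, f' s) :
    ContinuousOn F (Icc 0 T) := by
  have h1 : ContinuousOn (fun t => F 0 + ∫ s in (0:ℝ)..t, f' s) (Icc 0 T) := by
    refine continuousOn_const.add ?_
    have h2 := intervalIntegral.continuousOn_primitive_interval' (μ := volume) (f := f')
      (b₁ := 0) (b₂ := T) (a := 0) hi (by simp [Set.left_mem_uIcc])
    simpa [uIcc_of_le hT] using h2
  exact h1.congr (fun t ht => hF t ht.1)

lemma fubini_core {f' g' : ℝ → ℝ} {t : ℝ} (ht : 0 < t)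
    (hf : IntervalIntegrable f' volume 0 t)
    (hg : IntervalIntegrable g' volume 0 t) :
    (∫ s in (0:ℝ)..t, g' s * ∫ u in (0:ℝ)..s, f' u) =
      ∫ u in (0:ℝ)..t, f' u * ((∫ s in (0:ℝ)..t, g' s) - ∫ s in (0:ℝ)..u, g' s) := by
  set ν := volume.restrict (Ioc (0:ℝ) t) with hν
  have hfν : Integrable f' ν := by
    rw [hν]; exact (intervalIntegrable_iff_integrableOn_Ioc_of_le ht.le).mp hf
  have hgν : Integrable g' ν := by
    rw [hν]; exact (intervalIntegrable_iff_integrableOn_Ioc_of_le ht.le).mp hg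
  set H : ℝ → ℝ → ℝ := fun s u => if u ≤ s then g' s * f' u else 0 with hH
  have hmeas : MeasurableSet {p : ℝ × ℝ | p.2 ≤ p.1} :=
    measurableSet_le measurable_snd measurable_fst
  have hint : Integrable (Function.uncurry H) (ν.prod ν) := by
    have hbase : Integrable (fun p : ℝ × ℝ => g' p.1 * f' p.2) (ν.prod ν) :=
      hgν.mul_prod hfν
    have : Function.uncurry H = {p : ℝ × ℝ | p.2 ≤ p.1}.indicator
        (fun p : ℝ × ℝ => g' p.1 * f' p.2) := by
      funext p
      by_cases h : p.2 ≤ p.1 <;>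
        simp [Function.uncurry, hH, h, Set.indicator_of_mem, Set.indicator_of_notMem,
          Set.mem_setOf_eq]
    rw [this]
    exact hbase.indicator hmeas
  -- LHS = iterated integral of H
  have hL : (∫ s in (0:ℝ)..t, g' s * ∫ u in (0:ℝ)..s, f' u) = ∫ s, ∫ u, H s u ∂ν ∂ν := by
    rw [intervalIntegral.integral_of_le ht.le]
    refine integral_congr_ae ?_
    filter_upwards [ae_restrict_mem measurableSet_Ioc] with s hs
    have h1 : (fun u => H s u) = fun u => g' s * (Iic s).indicator f' u := by
      funext u; by_cases h : u ≤ s <;> simp [hH, h, Set.indicator_of_mem, Set.indicator_of_notMem]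
    rw [h1, MeasureTheory.integral_const_mul, MeasureTheory.integral_indicator measurableSet_Iic]
    congr 1
    rw [intervalIntegral.integral_of_le hs.1.le]
    rw [hν, Measure.restrict_restrict measurableSet_Iic]
    have hset : Iic s ∩ Ioc 0 t = Ioc 0 s := by
      ext x
      simp only [mem_inter_iff, mem_Iic, mem_Ioc]
      exact ⟨fun ⟨h1, h2, _⟩ => ⟨h2, h1⟩, fun ⟨h1, h2⟩ => ⟨h2, h1, h2.trans hs.2⟩⟩
    rw [hset]
  -- RHS = swapped iterated integral of H
  have hR : (∫ u in (0:ℝ)..t, f' u * ((∫ s in (0:ℝ)..t, g' s) - ∫ s in (0:ℝ)..u, g' s)) =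
      ∫ u, ∫ s, H s u ∂ν ∂ν := by
    rw [intervalIntegral.integral_of_le ht.le]
    refine integral_congr_ae ?_
    filter_upwards [ae_restrict_mem measurableSet_Ioc] with u hu
    have h1 : (fun s => H s u) = fun s => f' u * (Ici u).indicator g' s := by
      funext s; by_cases h : u ≤ s <;>
        simp [hH, h, Set.indicator_of_mem, Set.indicator_of_notMem, mul_comm]
    rw [h1, MeasureTheory.integral_const_mul, MeasureTheory.integral_indicator measurableSet_Ici]
    congr 1
    rw [hν, Measure.restrict_restrict measurableSet_Ici]
    have hset : Ici u ∩ Ioc 0 t = Icc u t := by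
      ext x
      simp only [mem_inter_iff, mem_Ici, mem_Ioc, mem_Icc]
      exact ⟨fun ⟨h1, _, h3⟩ => ⟨h1, h3⟩, fun ⟨h1, h2⟩ => ⟨h1, hu.1.trans_le h1, h2⟩⟩
    rw [hset]
    have : ∫ x in Icc u t, g' x = ∫ x in Ioc u t, g' x := integral_Icc_eq_integral_Ioc
    rw [this, ← intervalIntegral.integral_of_le hu.2]
    have hgu : IntervalIntegrable g' volume 0 u := hg.mono_set (by
      rw [uIcc_of_le ht.le, uIcc_of_le hu.1.le]
      exact Icc_subset_Icc le_rfl hu.2)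
    rw [← intervalIntegral.integral_interval_sub_left hg hgu]
  rw [hL, hR, MeasureTheory.integral_integral_swap hint]

/-- Product rule in integral form for absolutely continuous functions. -/
lemma primitive_mul {f' g' F G : ℝ → ℝ}
    (hf : ∀ T : ℝ, 0 < T → IntervalIntegrable f' volume 0 T)
    (hg : ∀ T : ℝ, 0 < T → IntervalIntegrable g' volume 0 T)
    (hF : ∀ t, 0 ≤ t → F t = F 0 + ∫ s in (0:ℝ)..t, f' s)
    (hG : ∀ t, 0 ≤ t → G t = G 0 + ∫ s in (0:ℝ)..t, g' s) :
    ∀ t, 0 ≤ t → F t * G t = F 0 * G 0 + ∫ s in (0:ℝ)..t, (f' s * G s + F s * g' s) := by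
  intro t ht0
  rcases ht0.eq_or_lt with h | ht
  · simp [← h]
  have hft := hf t ht
  have hgt := hg t ht
  have hcontPf : ContinuousOn (fun s => ∫ u in (0:ℝ)..s, f' u) (uIcc 0 t) :=
    intervalIntegral.continuousOn_primitive_interval' hft (by simp [Set.left_mem_uIcc])
  have hcontPg : ContinuousOn (fun s => ∫ u in (0:ℝ)..s, g' u) (uIcc 0 t) :=
    intervalIntegral.continuousOn_primitive_interval' hgt (by simp [Set.left_mem_uIcc])
  -- rewrite integrand via primitives
  have hcongr : ∫ s in (0:ℝ)..t, (f' s * G s + F s * g' s) =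
      ∫ s in (0:ℝ)..t, (f' s * (G 0 + ∫ u in (0:ℝ)..s, g' u)
        + (F 0 + ∫ u in (0:ℝ)..s, f' u) * g' s) := by
    refine intervalIntegral.integral_congr (fun s hs => ?_)
    rw [uIcc_of_le ht.le] at hs
    rw [← hF s hs.1, ← hG s hs.1]
  rw [hcongr]
  have i1 : IntervalIntegrable (fun s => f' s * (G 0 + ∫ u in (0:ℝ)..s, g' u)) volume 0 t :=
    hft.mul_continuousOn (continuousOn_const.add hcontPg)
  have i2 : IntervalIntegrable (fun s => (F 0 + ∫ u in (0:ℝ)..s, f' u) * g' s) volume 0 t :=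
    hgt.continuousOn_mul (continuousOn_const.add hcontPf)
  rw [intervalIntegral.integral_add i1 i2]
  have e1 : ∫ s in (0:ℝ)..t, f' s * (G 0 + ∫ u in (0:ℝ)..s, g' u) =
      G 0 * (∫ s in (0:ℝ)..t, f' s) + ∫ s in (0:ℝ)..t, f' s * ∫ u in (0:ℝ)..s, g' u := by
    have i1a : IntervalIntegrable (fun s => f' s * G 0) volume 0 t := hft.mul_const _
    have i1b : IntervalIntegrable (fun s => f' s * ∫ u in (0:ℝ)..s, g' u) volume 0 t :=
      hft.mul_continuousOn hcontPg
    have : (fun s => f' s * (G 0 + ∫ u in (0:ℝ)..s, g' u)) =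
        fun s => f' s * G 0 + f' s * ∫ u in (0:ℝ)..s, g' u := by funext s; ring
    rw [this, intervalIntegral.integral_add i1a i1b]
    simp [mul_comm, intervalIntegral.integral_mul_const]
  have e2 : ∫ s in (0:ℝ)..t, (F 0 + ∫ u in (0:ℝ)..s, f' u) * g' s =
      F 0 * (∫ s in (0:ℝ)..t, g' s) + ∫ s in (0:ℝ)..t, g' s * ∫ u in (0:ℝ)..s, f' u := by
    have i2a : IntervalIntegrable (fun s => F 0 * g' s) volume 0 t := hgt.const_mul _
    have i2b : IntervalIntegrable (fun s => g' s * ∫ u in (0:ℝ)..s, f' u) volume 0 t :=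
      hgt.mul_continuousOn hcontPf
    have : (fun s => (F 0 + ∫ u in (0:ℝ)..s, f' u) * g' s) =
        fun s => F 0 * g' s + g' s * ∫ u in (0:ℝ)..s, f' u := by funext s; ring
    rw [this, intervalIntegral.integral_add i2a i2b]
    simp [intervalIntegral.integral_const_mul]
  rw [e1, e2, fubini_core ht hft hgt]
  have e3 : ∫ u in (0:ℝ)..t, f' u * ((∫ s in (0:ℝ)..t, g' s) - ∫ s in (0:ℝ)..u, g' s) =
      (∫ s in (0:ℝ)..t, g' s) * (∫ u in (0:ℝ)..t, f' u)
        - ∫ u in (0:ℝ)..t, f' u * ∫ s in (0:ℝ)..u, g' s := by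
    have ia : IntervalIntegrable (fun u => f' u * ∫ s in (0:ℝ)..t, g' s) volume 0 t :=
      hft.mul_const _
    have ib : IntervalIntegrable (fun u => f' u * ∫ s in (0:ℝ)..u, g' s) volume 0 t :=
      hft.mul_continuousOn hcontPg
    have : (fun u => f' u * ((∫ s in (0:ℝ)..t, g' s) - ∫ s in (0:ℝ)..u, g' s)) =
        fun u => f' u * (∫ s in (0:ℝ)..t, g' s) - f' u * ∫ s in (0:ℝ)..u, g' s := by
      funext u; ring
    rw [this, intervalIntegral.integral_sub ia ib]
    simp [mul_comm, intervalIntegral.integral_mul_const]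
  rw [e3, hF t ht.le, hG t ht.le]
  ring

/-- Powers of the primitive of `|k|` are primitives. -/
lemma pow_primitive {k : ℝ → ℝ} (hk : ∀ T : ℝ, 0 < T → IntervalIntegrable k volume 0 T) :
    ∀ n : ℕ, ∀ t, 0 ≤ t →
      (∫ s in (0:ℝ)..t, |k s|) ^ (n + 1) =
        ∫ s in (0:ℝ)..t, ((n : ℝ) + 1) * |k s| * (∫ u in (0:ℝ)..s, |k u|) ^ n := by
  set A : ℝ → ℝ := fun r => ∫ s in (0:ℝ)..r, |k s| with hA
  have hkabs : ∀ T : ℝ, 0 < T → IntervalIntegrable (fun s => |k s|) volume 0 T :=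
    fun T hT => (hk T hT).abs
  have hA0 : A 0 = 0 := by simp [hA]
  have hApow : ∀ m : ℕ, ∀ T : ℝ, 0 < T →
      IntervalIntegrable (fun s => ((m : ℝ) + 1) * |k s| * A s ^ m) volume 0 T := by
    intro m T hT
    have hcont : ContinuousOn (fun s => ((m : ℝ) + 1) * A s ^ m) (uIcc 0 T) := by
      have : ContinuousOn A (uIcc 0 T) :=
        intervalIntegral.continuousOn_primitive_interval' (hkabs T hT) (by simp [Set.left_mem_uIcc])
      exact continuousOn_const.mul (this.pow m)
    have heq : (fun s => ((m : ℝ) + 1) * |k s| * A s ^ m) =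
        fun s => |k s| * (((m : ℝ) + 1) * A s ^ m) := by funext s; ring
    rw [heq]
    exact (hkabs T hT).mul_continuousOn hcont
  intro n
  induction n with
  | zero =>
    intro t ht
    rw [pow_one]
    show (∫ s in (0:ℝ)..t, |k s|) = _
    exact (intervalIntegral.integral_congr (g := fun s => |k s|)
      (fun s _ => by norm_num)).symm
  | succ n ih =>
    intro t ht
    have hF : ∀ r, 0 ≤ r → A r ^ (n + 1) = A 0 ^ (n + 1) + ∫ s in (0:ℝ)..r,
        ((n : ℝ) + 1) * |k s| * A s ^ n := by
      intro r hr
      rw [hA0, zero_pow (Nat.succ_ne_zero n), zero_add]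
      exact ih r hr
    have hG : ∀ r, 0 ≤ r → A r = A 0 + ∫ s in (0:ℝ)..r, |k s| := by
      intro r hr; rw [hA0, zero_add]
    have key := primitive_mul (hApow n) hkabs hF hG t ht
    rw [hA0, zero_pow (Nat.succ_ne_zero n), zero_mul, zero_add] at key
    rw [pow_succ, key]
    refine intervalIntegral.integral_congr (fun s _ => ?_)
    push_cast
    ring

/-- Uniqueness for the linear integral equation `D = ∫ k D` (Grönwall). -/
lemma gronwall_zero {k D : ℝ → ℝ}
    (hk : ∀ T : ℝ, 0 < T → IntervalIntegrable k volume 0 T)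
    (hD : ∀ T : ℝ, 0 < T → ContinuousOn D (Icc 0 T))
    (hDeq : ∀ t, 0 ≤ t → D t = ∫ s in (0:ℝ)..t, k s * D s) :
    ∀ t, 0 ≤ t → D t = 0 := by
  intro t ht0
  rcases ht0.eq_or_lt with h | ht
  · rw [hDeq t ht0, ← h]; simp
  obtain ⟨M, hM⟩ := (isCompact_Icc (a := (0:ℝ)) (b := t)).exists_bound_of_continuousOn (hD t ht)
  set A : ℝ → ℝ := fun r => ∫ s in (0:ℝ)..r, |k s| with hA
  have hkabs : ∀ T : ℝ, 0 < T → IntervalIntegrable (fun s => |k s|) volume 0 T :=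
    fun T hT => (hk T hT).abs
  have hcontA : ContinuousOn A (uIcc 0 t) :=
    intervalIntegral.continuousOn_primitive_interval' (hkabs t ht) (by simp [Set.left_mem_uIcc])
  have hkD : IntervalIntegrable (fun s => k s * D s) volume 0 t :=
    (hk t ht).mul_continuousOn (by rw [uIcc_of_le ht.le]; exact hD t ht)
  have claim : ∀ n : ℕ, ∀ r ∈ Icc (0:ℝ) t, |D r| ≤ M * (A r ^ n / (Nat.factorial n : ℝ)) := by
    intro n
    induction n with
    | zero =>
      intro r hr
      simpa using hM r hr
    | succ n ih =>
      intro r hr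
      have hr0 : 0 ≤ r := hr.1
      have hkDr : IntervalIntegrable (fun s => k s * D s) volume 0 r :=
        hkD.mono_set (by rw [uIcc_of_le ht.le, uIcc_of_le hr0]; exact Icc_subset_Icc le_rfl hr.2)
      have h1 : |D r| ≤ ∫ s in (0:ℝ)..r, |k s * D s| := by
        rw [hDeq r hr0]
        exact intervalIntegral.abs_integral_le_integral_abs hr0
      have h2 : (∫ s in (0:ℝ)..r, |k s * D s|) ≤
          ∫ s in (0:ℝ)..r, |k s| * (M * (A s ^ n / (Nat.factorial n : ℝ))) := by
        have hsub : uIcc (0:ℝ) r ⊆ uIcc 0 t := by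
          rw [uIcc_of_le ht.le, uIcc_of_le hr0]; exact Icc_subset_Icc le_rfl hr.2
        have hint2 : IntervalIntegrable (fun s => |k s| * (M * (A s ^ n / (Nat.factorial n : ℝ)))) volume 0 r := by
          refine ((hkabs t ht).mono_set hsub).mul_continuousOn ?_
          have : ContinuousOn A (uIcc 0 r) := hcontA.mono hsub
          fun_prop
        refine intervalIntegral.integral_mono_on hr0 hkDr.abs hint2 ?_
        · intro s hs
          rw [abs_mul]
          exact mul_le_mul_of_nonneg_left (ih s ⟨hs.1, hs.2.trans hr.2⟩) (abs_nonneg _)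
      have h3 : (∫ s in (0:ℝ)..r, |k s| * (M * (A s ^ n / (Nat.factorial n : ℝ)))) =
          (M / (Nat.factorial (n+1) : ℝ)) * ∫ s in (0:ℝ)..r, ((n : ℝ) + 1) * |k s| * A s ^ n := by
        rw [← intervalIntegral.integral_const_mul]
        refine intervalIntegral.integral_congr (fun s _ => ?_)
        rw [Nat.factorial_succ]
        push_cast
        field_simp
      have h4 := pow_primitive hk n r hr0
      calc |D r| ≤ ∫ s in (0:ℝ)..r, |k s| * (M * (A s ^ n / (Nat.factorial n : ℝ))) := h1.trans h2
        _ = (M / (Nat.factorial (n+1) : ℝ)) * A r ^ (n + 1) := by rw [h3, ← h4]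
        _ = M * (A r ^ (n + 1) / (Nat.factorial (n+1) : ℝ)) := by field_simp
  have htend : Filter.Tendsto (fun n : ℕ => M * (A t ^ n / (Nat.factorial n : ℝ))) Filter.atTop (nhds 0) := by
    have := FloorSemiring.tendsto_pow_div_factorial_atTop (A t)
    simpa using this.const_mul M
  have hle : |D t| ≤ 0 := ge_of_tendsto htend
    (Filter.Eventually.of_forall (fun n => claim n t ⟨ht0, le_rfl⟩))
  exact abs_nonpos_iff.mp hle

/-- The reciprocal of a positive AC function is AC with the expected derivative. -/
lemma recip_primitive {V' V : ℝ → ℝ}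
    (hV' : ∀ T : ℝ, 0 < T → IntervalIntegrable V' volume 0 T)
    (hV : ∀ t, 0 ≤ t → V t = V 0 + ∫ s in (0:ℝ)..t, V' s)
    (hVpos : ∀ t, 0 ≤ t → 0 < V t) :
    ∀ t, 0 ≤ t → 1 / V t = 1 / V 0 + ∫ s in (0:ℝ)..t, -(V' s) / (V s) ^ 2 := by
  have hVcont : ∀ T : ℝ, 0 < T → ContinuousOn V (Icc 0 T) :=
    fun T hT => contOn_of_prim hT.le (hV' T hT) hV
  have hVne : ∀ t, 0 ≤ t → V t ≠ 0 := fun t ht => (hVpos t ht).ne'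
  set w' : ℝ → ℝ := fun s => -(V' s) / (V s) ^ 2 with hw'
  have hw'int : ∀ T : ℝ, 0 < T → IntervalIntegrable w' volume 0 T := by
    intro T hT
    have heq : w' = fun s => V' s * (-1 / (V s) ^ 2) := by funext s; rw [hw']; ring
    rw [heq]
    refine (hV' T hT).mul_continuousOn ?_
    rw [uIcc_of_le hT.le]
    exact continuousOn_const.div ((hVcont T hT).pow 2)
      (fun s hs => pow_ne_zero 2 (hVne s hs.1))
  set W : ℝ → ℝ := fun t => 1 / V 0 + ∫ s in (0:ℝ)..t, w' s with hW
  have hW0 : W 0 = 1 / V 0 := by simp [hW]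
  have hWprim : ∀ t, 0 ≤ t → W t = W 0 + ∫ s in (0:ℝ)..t, w' s := by
    intro t ht; rw [hW0]
  have hWcont : ∀ T : ℝ, 0 < T → ContinuousOn W (Icc 0 T) :=
    fun T hT => contOn_of_prim hT.le (hw'int T hT) hWprim
  set D : ℝ → ℝ := fun t => W t * V t - 1 with hD
  have hkint : ∀ T : ℝ, 0 < T → IntervalIntegrable (fun s => V' s / V s) volume 0 T := by
    intro T hT
    have heq : (fun s => V' s / V s) = fun s => V' s * (1 / V s) := by funext s; ring
    rw [heq]
    refine (hV' T hT).mul_continuousOn ?_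
    rw [uIcc_of_le hT.le]
    exact continuousOn_const.div (hVcont T hT) (fun s hs => hVne s hs.1)
  have hDeq : ∀ t, 0 ≤ t → D t = ∫ s in (0:ℝ)..t, (V' s / V s) * D s := by
    intro t ht
    have key := primitive_mul hw'int hV' hWprim hV t ht
    have hWV0 : W 0 * V 0 = 1 := by
      rw [hW0]; field_simp [hVne 0 le_rfl]
    rw [hD]
    simp only
    rw [key, hWV0]
    have : ∀ s ∈ uIcc (0:ℝ) t, w' s * V s + W s * V' s = (V' s / V s) * D s := by
      intro s hs
      rw [uIcc_of_le ht] at hs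
      have hVs := hVne s hs.1
      rw [hw', hD]
      simp only
      field_simp
      ring
    rw [intervalIntegral.integral_congr this]
    ring
  have hDcont : ∀ T : ℝ, 0 < T → ContinuousOn D (Icc 0 T) :=
    fun T hT => ((hWcont T hT).mul (hVcont T hT)).sub continuousOn_const
  have hD0 := gronwall_zero hkint hDcont hDeq
  intro t ht
  have := hD0 t ht
  rw [hD] at this
  simp only at this
  have hVt := hVne t ht
  have hWt : W t = 1 / V t := by
    field_simp at this ⊢
    linarith [this]
  rw [← hWt, hWprim t ht, hW0]

/-- (Switching function derivative) Along an admissible trajectory of the planar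
fed-batch dynamics with an adjoint solution, the switching function
`φ(t) = λ_S(t)(S_in - S(t))/V(t) + λ_V(t)` is absolutely continuous and satisfies,
for almost every `t ≥ 0`,
`φ'(t) = λ_S(t) ((S_in - S(t))/V(t)) μ'(S(t)) X(t)` with `X = M0/V + S_in - S`. -/
theorem stmt8 (Sin M0 Qmax : ℝ) (hSin : 0 < Sin) (hM0 : 0 < M0) (hQmax : 0 < Qmax)
    (μ : ℝ → ℝ) (hμ : ContDiff ℝ (⊤ : ℕ∞) μ) (hμ0 : μ 0 = 0) (hμpos : ∀ s, 0 < s → 0 < μ s)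
    (Q S V lS lV : ℝ → ℝ)
    (htraj : IsPlanarTraj Sin M0 Qmax μ Q S V)
    (hadj : IsAdjoint Sin M0 μ Q S V lS lV) :
    ∃ φ' : ℝ → ℝ,
      (∀ T : ℝ, 0 < T → IntervalIntegrable φ' volume 0 T) ∧
      (∀ t, 0 ≤ t →
        lS t * (Sin - S t) / V t + lV t =
          (lS 0 * (Sin - S 0) / V 0 + lV 0) + ∫ s in (0:ℝ)..t, φ' s) ∧
      (∀ᵐ t ∂(volume.restrict (Ici (0:ℝ))),
        φ' t = lS t * ((Sin - S t) / V t) * deriv μ (S t) * (M0 / V t + Sin - S t)) := by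
  obtain ⟨hQmeas, hQbd, hVpos, S', V', hint, hSprim, hVprim, hdyn⟩ := htraj
  obtain ⟨lS', lV', hint2, hlSprim, hlVprim, hadyn⟩ := hadj
  have hVne : ∀ t, 0 ≤ t → V t ≠ 0 := fun t ht => (hVpos t ht).ne'
  have hS'int : ∀ T : ℝ, 0 < T → IntervalIntegrable S' volume 0 T := fun T hT => (hint T hT).1
  have hV'int : ∀ T : ℝ, 0 < T → IntervalIntegrable V' volume 0 T := fun T hT => (hint T hT).2
  have hlS'int : ∀ T : ℝ, 0 < T → IntervalIntegrable lS' volume 0 T := fun T hT => (hint2 T hT).1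
  have hlV'int : ∀ T : ℝ, 0 < T → IntervalIntegrable lV' volume 0 T := fun T hT => (hint2 T hT).2
  -- continuity of the state/adjoint on compact intervals
  have hScont : ∀ T : ℝ, 0 < T → ContinuousOn S (Icc 0 T) :=
    fun T hT => contOn_of_prim hT.le (hS'int T hT) hSprim
  have hVcont : ∀ T : ℝ, 0 < T → ContinuousOn V (Icc 0 T) :=
    fun T hT => contOn_of_prim hT.le (hV'int T hT) hVprim
  have hlScont : ∀ T : ℝ, 0 < T → ContinuousOn lS (Icc 0 T) :=
    fun T hT => contOn_of_prim hT.le (hlS'int T hT) hlSprim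
  -- building blocks
  set P1 : ℝ → ℝ := fun t => Sin - S t with hP1
  set R : ℝ → ℝ := fun t => 1 / V t with hR
  set w' : ℝ → ℝ := fun s => -(V' s) / (V s) ^ 2 with hw'
  set p2' : ℝ → ℝ := fun s => lS' s * P1 s + lS s * (-(S' s)) with hp2'
  set P2 : ℝ → ℝ := fun t => lS t * P1 t with hP2
  set p3' : ℝ → ℝ := fun s => p2' s * R s + P2 s * w' s with hp3'
  have hP1cont : ∀ T : ℝ, 0 < T → ContinuousOn P1 (Icc 0 T) :=
    fun T hT => continuousOn_const.sub (hScont T hT)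
  have hRcont : ∀ T : ℝ, 0 < T → ContinuousOn R (Icc 0 T) :=
    fun T hT => continuousOn_const.div (hVcont T hT) (fun s hs => hVne s hs.1)
  have hP2cont : ∀ T : ℝ, 0 < T → ContinuousOn P2 (Icc 0 T) :=
    fun T hT => (hlScont T hT).mul (hP1cont T hT)
  have hw'int : ∀ T : ℝ, 0 < T → IntervalIntegrable w' volume 0 T := by
    intro T hT
    have heq : w' = fun s => V' s * (-1 / (V s) ^ 2) := by funext s; rw [hw']; ring
    rw [heq]
    refine (hV'int T hT).mul_continuousOn ?_
    rw [uIcc_of_le hT.le]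
    exact continuousOn_const.div ((hVcont T hT).pow 2) (fun s hs => pow_ne_zero 2 (hVne s hs.1))
  have hp2'int : ∀ T : ℝ, 0 < T → IntervalIntegrable p2' volume 0 T := by
    intro T hT
    refine ((hlS'int T hT).mul_continuousOn (by rw [uIcc_of_le hT.le]; exact hP1cont T hT)).add ?_
    exact ((hS'int T hT).neg).continuousOn_mul (by rw [uIcc_of_le hT.le]; exact hlScont T hT)
  have hp3'int : ∀ T : ℝ, 0 < T → IntervalIntegrable p3' volume 0 T := by
    intro T hT
    refine ((hp2'int T hT).mul_continuousOn (by rw [uIcc_of_le hT.le]; exact hRcont T hT)).add ?_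
    exact ((hw'int T hT).continuousOn_mul (by rw [uIcc_of_le hT.le]; exact hP2cont T hT))
  -- primitive representations
  have hP1prim : ∀ t, 0 ≤ t → P1 t = P1 0 + ∫ s in (0:ℝ)..t, -(S' s) := by
    intro t ht
    rw [hP1]
    simp only
    rw [hSprim t ht, intervalIntegral.integral_neg]
    ring
  have hRprim : ∀ t, 0 ≤ t → R t = R 0 + ∫ s in (0:ℝ)..t, w' s := by
    intro t ht
    rw [hR]
    simp only
    exact recip_primitive hV'int hVprim hVpos t ht
  have hP2prim : ∀ t, 0 ≤ t → P2 t = P2 0 + ∫ s in (0:ℝ)..t, p2' s :=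
    primitive_mul hlS'int (fun T hT => (hS'int T hT).neg) hlSprim hP1prim
  have hP3prim : ∀ t, 0 ≤ t → P2 t * R t = P2 0 * R 0 + ∫ s in (0:ℝ)..t, p3' s :=
    primitive_mul hp2'int hw'int hP2prim hRprim
  refine ⟨fun s => p3' s + lV' s, ?_, ?_, ?_⟩
  · intro T hT
    exact (hp3'int T hT).add (hlV'int T hT)
  · intro t ht
    have key : lS t * (Sin - S t) / V t = P2 t * R t := by
      rw [hP2, hR, hP1]; simp only; field_simp
    have key0 : lS 0 * (Sin - S 0) / V 0 = P2 0 * R 0 := by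
      rw [hP2, hR, hP1]; simp only; field_simp
    rw [key, key0, hP3prim t ht, hlVprim t ht]
    rcases ht.eq_or_lt with h | htpos
    · simp [← h]
    rw [intervalIntegral.integral_add (hp3'int t htpos) (hlV'int t htpos)]
    ring
  · filter_upwards [hdyn, hadyn, ae_restrict_mem measurableSet_Ici] with t hd ha htmem
    obtain ⟨hS', hV'⟩ := hd
    obtain ⟨hlS', hlV'⟩ := ha
    have ht0 : (0:ℝ) ≤ t := htmem
    have hVt : V t ≠ 0 := hVne t ht0
    rw [hp3', hp2', hP2, hR, hw', hP1]
    simp only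
    rw [hS', hV', hlS', hlV']
    field_simp
    ring
end
end

section
/- (Necessary condition for a singular arc) Let (S(·),V(·)) be an admissible trajectory of the planar fed-batch dynamics with S(t) < S_in, let (λ_S(·),λ_V(·)) solve the adjoint system along it with λ_S(t) ≠ 0, and suppose the switching function φ(t) = λ_S(t)(S_in − S(t))/V(t) + λ_V(t) vanishes identically on a nondegenerate interval I. Then μ'(S(t)) = 0 for every t ∈ I. -/
open MeasureTheory Set

open Filter Topology intervalIntegral

lemma aux_slope (f : ℝ → ℝ) (hint : ∀ u v : ℝ, IntervalIntegrable f volume u v)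
    {t y : ℝ} (hty : t < y) :
    slope (fun x => ∫ s in (0:ℝ)..x, f s) t y = ⨍ s in Icc t y, f s := by
  rw [slope_def_field, div_eq_inv_mul]
  have h1 : (∫ s in (0:ℝ)..y, f s) - ∫ s in (0:ℝ)..t, f s = ∫ s in t..y, f s :=
    integral_interval_sub_left (hint 0 y) (hint 0 t)
  rw [h1, setAverage_eq, intervalIntegral.integral_of_le hty.le,
    ← integral_Icc_eq_integral_Ioc, Real.volume_real_Icc_of_le hty.le,
    smul_eq_mul]

lemma aux_ae_hasDerivAt (f : ℝ → ℝ) (hf : LocallyIntegrable f (volume : Measure ℝ)) :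
    ∀ᵐ t : ℝ, HasDerivAt (fun x => ∫ s in (0:ℝ)..x, f s) (f t) t := by
  filter_upwards [(IsUnifLocDoublingMeasure.vitaliFamily (volume : Measure ℝ) 1).ae_tendsto_average hf] with t ht
  have hint : ∀ u v : ℝ, IntervalIntegrable f volume u v := fun u v =>
    (hf.integrableOn_isCompact isCompact_uIcc).intervalIntegrable
  rw [hasDerivAt_iff_tendsto_slope, ← nhdsLT_sup_nhdsGT t, tendsto_sup]
  constructor
  · have h2 : Tendsto (fun y => ⨍ s in Icc y t, f s) (𝓝[<] t) (𝓝 (f t)) :=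
      ht.comp (Real.tendsto_Icc_vitaliFamily_left t)
    refine h2.congr' ?_
    filter_upwards [self_mem_nhdsWithin] with y (hy : y < t)
    rw [← aux_slope f hint hy, slope_comm]
  · have h2 : Tendsto (fun y => ⨍ s in Icc t y, f s) (𝓝[>] t) (𝓝 (f t)) :=
      ht.comp (Real.tendsto_Icc_vitaliFamily_right t)
    refine h2.congr' ?_
    filter_upwards [self_mem_nhdsWithin] with y (hy : t < y)
    rw [← aux_slope f hint hy]

lemma aux_loc (f : ℝ → ℝ) (h : ∀ T : ℝ, 0 < T → IntervalIntegrable f volume 0 T) :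
    LocallyIntegrable ((Ioi (0:ℝ)).indicator f) (volume : Measure ℝ) := by
  rw [locallyIntegrable_iff]
  intro k hk
  obtain ⟨T, hT⟩ := hk.isBounded.subset_closedBall 0
  have hT1 : (0:ℝ) < max T 1 := lt_max_of_lt_right one_pos
  have h2 : IntegrableOn f (Ioc 0 (max T 1)) volume := (h (max T 1) hT1).1
  rw [IntegrableOn, integrable_indicator_iff measurableSet_Ioi, IntegrableOn,
    Measure.restrict_restrict measurableSet_Ioi]
  refine h2.mono_set fun x hx => ?_
  have hxT : x ∈ Metric.closedBall (0:ℝ) T := hT hx.2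
  rw [Metric.mem_closedBall, Real.dist_eq, sub_zero] at hxT
  exact ⟨hx.1, le_max_of_le_left (le_of_abs_le hxT)⟩

lemma aux_int_eq (f : ℝ → ℝ) {x : ℝ} (hx : 0 ≤ x) :
    ∫ s in (0:ℝ)..x, (Ioi (0:ℝ)).indicator f s = ∫ s in (0:ℝ)..x, f s := by
  rw [intervalIntegral.integral_of_le hx, intervalIntegral.integral_of_le hx]
  refine setIntegral_congr_fun measurableSet_Ioc fun s hs => ?_
  exact indicator_of_mem (mem_Ioi.2 hs.1) f

noncomputable section

/-- (Necessary condition for a singular arc) If along an admissible trajectory of the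
planar fed-batch dynamics with `S(t) < S_in` and an adjoint solution with
`λ_S(t) ≠ 0`, the switching function `φ(t) = λ_S(t)(S_in - S(t))/V(t) + λ_V(t)`
vanishes identically on a nondegenerate interval `[a, b]`, then `μ'(S(t)) = 0` for
every `t ∈ [a, b]`. -/
theorem stmt9 (Sin M0 Qmax : ℝ) (hSin : 0 < Sin) (hM0 : 0 < M0) (hQmax : 0 < Qmax)
    (μ : ℝ → ℝ) (hμ : ContDiff ℝ (⊤ : ℕ∞) μ) (hμ0 : μ 0 = 0) (hμpos : ∀ s, 0 < s → 0 < μ s)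
    (Q S V lS lV : ℝ → ℝ)
    (htraj : IsPlanarTraj Sin M0 Qmax μ Q S V)
    (hS : ∀ t, 0 ≤ t → S t < Sin)
    (hadj : IsAdjoint Sin M0 μ Q S V lS lV)
    (a b : ℝ) (ha : 0 ≤ a) (hab : a < b)
    (hlS : ∀ t ∈ Icc a b, lS t ≠ 0)
    (hphi : ∀ t ∈ Icc a b, lS t * (Sin - S t) / V t + lV t = 0) :
    ∀ t ∈ Icc a b, deriv μ (S t) = 0 := by
  obtain ⟨hQm, hQbd, hVpos, S', V', hintSV, hSint, hVint, hode⟩ := htraj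
  obtain ⟨lS', lV', hintl, hlSint, hlVint, hodeA⟩ := hadj
  set Sd := (Ioi (0:ℝ)).indicator S' with hSd
  set Vd := (Ioi (0:ℝ)).indicator V' with hVd
  set lSd := (Ioi (0:ℝ)).indicator lS' with hlSd
  set lVd := (Ioi (0:ℝ)).indicator lV' with hlVd
  have hlocS : LocallyIntegrable Sd volume := aux_loc S' (fun T hT => (hintSV T hT).1)
  have hlocV : LocallyIntegrable Vd volume := aux_loc V' (fun T hT => (hintSV T hT).2)
  have hloclS : LocallyIntegrable lSd volume := aux_loc lS' (fun T hT => (hintl T hT).1)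
  have hloclV : LocallyIntegrable lVd volume := aux_loc lV' (fun T hT => (hintl T hT).2)
  -- the continuous modification of S
  set g : ℝ → ℝ := fun x => deriv μ (S 0 + ∫ s in (0:ℝ)..x, Sd s) with hg
  have hgcont : Continuous g := by
    refine (hμ.continuous_deriv (by simp)).comp ?_
    exact continuous_const.add (intervalIntegral.continuous_primitive
      (fun u v => (hlocS.integrableOn_isCompact isCompact_uIcc).intervalIntegrable) 0)
  have hgS : ∀ x : ℝ, 0 ≤ x → g x = deriv μ (S x) := by
    intro x hx
    rw [hg]
    simp only
    rw [aux_int_eq S' hx, ← hSint x hx]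
  -- the a.e. statement
  have hae : ∀ᵐ t : ℝ, t ∈ Ioo a b → g t = 0 := by
    have hodeR := (ae_restrict_iff' measurableSet_Ici).mp hode
    have hodeAR := (ae_restrict_iff' measurableSet_Ici).mp hodeA
    filter_upwards [aux_ae_hasDerivAt Sd hlocS, aux_ae_hasDerivAt Vd hlocV,
      aux_ae_hasDerivAt lSd hloclS, aux_ae_hasDerivAt lVd hloclV, hodeR, hodeAR]
      with t h1 h2 h3 h4 hP hA htI
    have htpos : 0 < t := lt_of_le_of_lt ha htI.1
    obtain ⟨hP1, hP2⟩ := hP (le_of_lt htpos)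
    obtain ⟨hA1, hA2⟩ := hA (le_of_lt htpos)
    have hVt : 0 < V t := hVpos t htpos.le
    have hVne : V t ≠ 0 := ne_of_gt hVt
    -- eventual equalities
    have hevgen : ∀ (f f' : ℝ → ℝ), (∀ x, 0 ≤ x → f x = f 0 + ∫ s in (0:ℝ)..x, f' s) →
        f =ᶠ[𝓝 t] fun x => f 0 + ∫ s in (0:ℝ)..x, (Ioi (0:ℝ)).indicator f' s := by
      intro f f' hf
      filter_upwards [Ioi_mem_nhds htpos] with x hx
      rw [aux_int_eq f' (le_of_lt hx), ← hf x (le_of_lt hx)]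
    have hdS : HasDerivAt S (S' t) t := by
      have := (h1.const_add (S 0)).congr_of_eventuallyEq (hevgen S S' hSint)
      rwa [hSd, indicator_of_mem (mem_Ioi.2 htpos)] at this
    have hdV : HasDerivAt V (V' t) t := by
      have := (h2.const_add (V 0)).congr_of_eventuallyEq (hevgen V V' hVint)
      rwa [hVd, indicator_of_mem (mem_Ioi.2 htpos)] at this
    have hdlS : HasDerivAt lS (lS' t) t := by
      have := (h3.const_add (lS 0)).congr_of_eventuallyEq (hevgen lS lS' hlSint)
      rwa [hlSd, indicator_of_mem (mem_Ioi.2 htpos)] at this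
    have hdlV : HasDerivAt lV (lV' t) t := by
      have := (h4.const_add (lV 0)).congr_of_eventuallyEq (hevgen lV lV' hlVint)
      rwa [hlVd, indicator_of_mem (mem_Ioi.2 htpos)] at this
    -- the switching function
    have hdnum : HasDerivAt (fun x => lS x * (Sin - S x))
        (lS' t * (Sin - S t) + lS t * (-(S' t))) t := hdlS.mul (hdS.const_sub Sin)
    have hdphi : HasDerivAt (fun x => lS x * (Sin - S x) / V x + lV x)
        (((lS' t * (Sin - S t) + lS t * (-(S' t))) * V t
          - lS t * (Sin - S t) * V' t) / V t ^ 2 + lV' t) t := (hdnum.div hdV hVne).add hdlV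
    have hdphi0 : HasDerivAt (fun x => lS x * (Sin - S x) / V x + lV x) 0 t := by
      refine (hasDerivAt_const t 0).congr_of_eventuallyEq ?_
      filter_upwards [Ioo_mem_nhds htI.1 htI.2] with x hx
      exact hphi x (Ioo_subset_Icc_self hx)
    have heq := hdphi.unique hdphi0
    rw [hP1, hP2, hA1, hA2] at heq
    have hSlt : S t < Sin := hS t htpos.le
    have hlSne : lS t ≠ 0 := hlS t (Ioo_subset_Icc_self htI)
    have key : deriv μ (S t) * (lS t * ((M0 + (Sin - S t) * V t) * (Sin - S t)) * V t ^ 5)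
        = 0 := by
      field_simp at heq
      linear_combination V t ^ 5 * heq
    rw [hgS t htpos.le]
    have hne : lS t * ((M0 + (Sin - S t) * V t) * (Sin - S t)) * V t ^ 5 ≠ 0 := by
      have h1 : 0 < (M0 + (Sin - S t) * V t) * (Sin - S t) :=
        mul_pos (by nlinarith) (by linarith)
      exact mul_ne_zero (mul_ne_zero hlSne h1.ne') (pow_ne_zero 5 hVne)
    rcases mul_eq_zero.mp key with h | h
    · exact h
    · exact absurd h hne
  -- from a.e. to everywhere by continuity
  have hU : (Ioo a b ∩ g ⁻¹' {(0:ℝ)}ᶜ) = ∅ := by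
    refine (isOpen_Ioo.inter (isOpen_compl_singleton.preimage hgcont)).eq_empty_of_measure_zero (μ := volume) ?_
    refine measure_mono_null (fun x hx => ?_) (ae_iff.mp hae)
    exact fun himp => hx.2 (by simp [himp hx.1])
  have hIoo : EqOn g 0 (Ioo a b) := by
    intro x hx
    by_contra h
    have hx2 : x ∈ Ioo a b ∩ g ⁻¹' {(0:ℝ)}ᶜ := ⟨hx, fun hmem => h (by simpa using hmem)⟩
    rw [hU] at hx2
    exact hx2
  have hIcc : EqOn g 0 (Icc a b) := by
    rw [← closure_Ioo hab.ne]
    exact hIoo.closure hgcont continuous_const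
  intro t ht
  rw [← hgS t (ha.trans ht.1)]
  exact hIcc ht
end
end

section
/- (Second derivative of the switching function at a critical point of μ) Let (S(·),V(·)) be an admissible trajectory of the planar fed-batch dynamics with continuously differentiable control Q, let (λ_S(·),λ_V(·)) solve the adjoint system along it, and let φ(t) = λ_S(t)(S_in − S(t))/V(t) + λ_V(t). If at a time t0 one has μ'(S(t0)) = 0, then φ is twice differentiable at t0 and φ''(t0) = λ_S(t0) ((S_in − S(t0))/V(t0)) μ''(S(t0)) X(t0) S'(t0), where X(t0) = M0/V(t0) + S_in − S(t0). -/
open Set Filter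

noncomputable section

/-- (Second derivative of the switching function at a critical point of `μ`)
Let `(S, V)` solve the planar fed-batch dynamics pointwise with a continuously
differentiable control `Q` (`V > 0`), and let `(λ_S, λ_V)` solve the adjoint system
along it. If at a time `t0` one has `μ'(S(t0)) = 0`, then the switching function
`φ(t) = λ_S(t)(S_in - S(t))/V(t) + λ_V(t)` is twice differentiable at `t0` with
`φ''(t0) = λ_S(t0)((S_in - S(t0))/V(t0)) μ''(S(t0)) X(t0) S'(t0)`,
where `X(t0) = M0/V(t0) + S_in - S(t0)`. -/
theorem stmt11 (Sin M0 Qmax : ℝ) (hSin : 0 < Sin) (hM0 : 0 < M0) (hQmax : 0 < Qmax)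
    (μ : ℝ → ℝ) (hμ : ContDiff ℝ (⊤ : ℕ∞) μ) (hμ0 : μ 0 = 0) (hμpos : ∀ s, 0 < s → 0 < μ s)
    (Q S V lS lV : ℝ → ℝ)
    (hQC1 : ContDiff ℝ 1 Q) (hQrange : ∀ t, Q t ∈ Icc (0:ℝ) Qmax)
    (hV : ∀ t, 0 < V t)
    (hSode : ∀ t, HasDerivAt S
      (-(μ (S t)) * (M0 / V t - S t + Sin) + (Q t / V t) * (Sin - S t)) t)
    (hVode : ∀ t, HasDerivAt V (Q t) t)
    (hlSode : ∀ t, HasDerivAt lS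
      (lS t * (deriv μ (S t) * (M0 / V t + Sin - S t) - μ (S t) + Q t / V t)) t)
    (hlVode : ∀ t, HasDerivAt lV
      (lS t * (-(μ (S t)) * M0 + Q t * (Sin - S t)) / (V t) ^ 2) t)
    (t0 : ℝ) (hcrit : deriv μ (S t0) = 0) :
    (∀ᶠ t in nhds t0, DifferentiableAt ℝ (fun t => lS t * (Sin - S t) / V t + lV t) t) ∧
    HasDerivAt (deriv (fun t => lS t * (Sin - S t) / V t + lV t))
      (lS t0 * ((Sin - S t0) / V t0) * deriv (deriv μ) (S t0) *
        (M0 / V t0 + Sin - S t0) * deriv S t0) t0 := by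

  have hVne : ∀ t, V t ≠ 0 := fun t => (hV t).ne'
  -- derivative of φ at every point
  have hD : ∀ t, HasDerivAt (fun t => lS t * (Sin - S t) / V t + lV t)
      (lS t * ((Sin - S t) / V t) * deriv μ (S t) * (M0 / V t + Sin - S t)) t := by
    intro t
    have h1 := ((hlSode t).mul ((hSode t).const_sub Sin)).div (hVode t) (hVne t)
    have h2 := h1.add (hlVode t)
    simp only [Pi.mul_def, Pi.div_def, Pi.add_def] at h2
    refine h2.congr_deriv (Eq.symm ?_)
    rw [← add_div, eq_div_iff (pow_ne_zero 2 (hVne t))]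
    field_simp [hVne t]
    ring
  -- differentiability everywhere
  refine ⟨Eventually.of_forall fun t => (hD t).differentiableAt, ?_⟩
  have hderiv : deriv (fun t => lS t * (Sin - S t) / V t + lV t)
      = fun t => lS t * ((Sin - S t) / V t) * deriv μ (S t) * (M0 / V t + Sin - S t) :=
    funext fun t => (hD t).deriv
  rw [hderiv]
  -- split as A * g with g t = deriv μ (S t)
  have hSdiff : HasDerivAt S (deriv S t0) t0 := (hSode t0).congr_deriv (hSode t0).deriv.symm
  have hμ' : ContDiff ℝ ((⊤ : ℕ∞) : WithTop ℕ∞) (deriv μ) := (contDiff_infty_iff_deriv.mp (hμ.of_le (by simp))).2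
  have hg : HasDerivAt (fun t => deriv μ (S t))
      (deriv (deriv μ) (S t0) * deriv S t0) t0 :=
    (hμ'.differentiable (by simp) (S t0)).hasDerivAt.comp t0 hSdiff
  have hA : DifferentiableAt ℝ
      (fun t => lS t * ((Sin - S t) / V t) * (M0 / V t + Sin - S t)) t0 := by
    have h1 : DifferentiableAt ℝ lS t0 := (hlSode t0).differentiableAt
    have h2 : DifferentiableAt ℝ S t0 := (hSode t0).differentiableAt
    have h3 : DifferentiableAt ℝ V t0 := (hVode t0).differentiableAt
    exact (h1.mul (((differentiableAt_const Sin).sub h2).div h3 (hVne t0))).mul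
      ((((differentiableAt_const M0).div h3 (hVne t0)).add
        (differentiableAt_const Sin)).sub h2)
  have key := (hA.hasDerivAt.mul hg)
  have heq : (fun t => lS t * ((Sin - S t) / V t) * (M0 / V t + Sin - S t)
      * deriv μ (S t))
      = fun t => lS t * ((Sin - S t) / V t) * deriv μ (S t) * (M0 / V t + Sin - S t) := by
    funext t; ring
  simp only [Pi.mul_def] at key
  rw [heq] at key
  refine key.congr_deriv (Eq.symm ?_)
  rw [hcrit]
  ring
end
end

section
/- (Sign of λ_S on the singular locus) Let λ0 ≤ 0, let (S,V,λ_S,λ_V) be values with V > 0, S < S_in, μ(S) > 0 and X = M0/V + S_in − S > 0, and suppose the Hamiltonian vanishes, H = λ0 − λ_S μ(S)X + Q(λ_S(S_in − S)/V + λ_V) = 0, at a point where the switching function φ = λ_S(S_in − S)/V + λ_V equals 0 and (λ_S,λ_V) ≠ (0,0). Then λ0 < 0 and λ_S < 0. -/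
open Set

noncomputable section

/-- (Sign of `λ_S` on the singular locus) Let `λ0 ≤ 0` and values `(S, V, λ_S, λ_V)`
with `V > 0`, `S < S_in`, `μ(S) > 0` and `X = M0/V + S_in - S > 0`. If the
Hamiltonian `H = λ0 - λ_S μ(S) X + Q (λ_S (S_in - S)/V + λ_V)` vanishes at a point
where the switching function `φ = λ_S (S_in - S)/V + λ_V` equals `0` and
`(λ_S, λ_V) ≠ (0, 0)`, then `λ0 < 0` and `λ_S < 0`. -/
theorem stmt12 (Sin M0 : ℝ) (hSin : 0 < Sin) (hM0 : 0 < M0)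
    (μ : ℝ → ℝ) (hμ : ContDiff ℝ (⊤ : ℕ∞) μ)
    (lam0 S V lS lV Q : ℝ)
    (hlam0 : lam0 ≤ 0) (hV : 0 < V) (hS : S < Sin) (hμS : 0 < μ S)
    (hX : 0 < M0 / V + Sin - S)
    (hH : lam0 - lS * μ S * (M0 / V - S + Sin) + Q * (lS * (Sin - S) / V + lV) = 0)
    (hphi : lS * (Sin - S) / V + lV = 0)
    (hnz : (lS, lV) ≠ (0, 0)) :
    lam0 < 0 ∧ lS < 0 := by
  rw [hphi, mul_zero, add_zero, sub_eq_zero] at hH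
  have hXpos : 0 < M0 / V - S + Sin := by linarith
  have hlSne : lS ≠ 0 := by
    intro h
    apply hnz
    have : lV = 0 := by rw [h] at hphi; simpa using hphi
    simp [h, this]
  have hlam0ne : lam0 ≠ 0 := by
    intro h
    apply hlSne
    have := hH.symm.trans h
    have h2 : μ S * (M0 / V - S + Sin) ≠ 0 := by positivity
    rcases mul_eq_zero.1 (by linarith [this] : lS * (μ S * (M0 / V - S + Sin)) = 0) with h3 | h3
    · exact h3
    · exact absurd h3 h2
  have hlam0lt : lam0 < 0 := lt_of_le_of_ne hlam0 hlam0ne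
  refine ⟨hlam0lt, ?_⟩
  by_contra h
  push_neg at h
  have : 0 ≤ lS * μ S * (M0 / V - S + Sin) := by positivity
  linarith [hH ▸ this]
end
end
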